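/- arXiv:2604.27052 — 4 statements merged into one kernel-verified Lean document; each statement's English description precedes it below -/
import Mathlib

section
/- Let f : ℝ^M → ℝ be continuously differentiable, and suppose f satisfies the Lojasiewicz gradient inequality at a point w* with exponent α = 1/2: there exist C > 0 and a ball B around w* such that |f(w) - f(w*)|^(1/2) ≤ C‖∇f(w)‖ for all w in B. If w : ℝ≥0 → ℝ^M solves the gradient flow w'(t) = -∇f(w(t)), remains in B for all t ≥ 0, and f(w(t)) ≥ f(w*) for all t, then f(w(t)) - f(w*) ≤ (f(w(0)) - f(w*)) · exp(-t/C²) for all t ≥ 0. -/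
/-!
Along the flow, `g t = f (w t) - f wstar` has derivative `-‖∇f (w t)‖²`, and squaring the
Łojasiewicz inequality gives `g ≤ C² ‖∇f‖²`. Hence `g' ≤ -g / C²` and Grönwall yields the decay.
-/

open Real Set

theorem le_mul_exp_of_hasDerivAt_le_mul {g g' : ℝ → ℝ} {K a : ℝ}
    (hg : ∀ t, a ≤ t → HasDerivAt g (g' t) t) (hbound : ∀ t, a ≤ t → g' t ≤ K * g t)
    {t : ℝ} (ht : a ≤ t) : g t ≤ g a * exp (K * (t - a)) := by
  have hcont : ContinuousOn g (Icc a t) := fun x hx => (hg x hx.1).continuousAt.continuousWithinAt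
  have hslope : ∀ x ∈ Ico a t, ∀ r, g' x < r →
      ∃ᶠ z in nhdsWithin x (Ioi x), (z - x)⁻¹ * (g z - g x) < r := fun x hx _ hr =>
    (hg x hx.1).hasDerivWithinAt.liminf_right_slope_le hr
  have := le_gronwallBound_of_liminf_deriv_right_le (K := K) (ε := 0) hcont hslope le_rfl
    (fun x hx => by simpa using hbound x hx.1) t ⟨ht, le_rfl⟩
  rwa [gronwallBound_ε0] at this

theorem HasGradientAt.comp_hasDerivAt {F : Type*} [NormedAddCommGroup F] [InnerProductSpace ℝ F]
    [CompleteSpace F] {f : F → ℝ} {f' : F} {w : ℝ → F} {v : F} {t : ℝ}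
    (hf : HasGradientAt f f' (w t)) (hw : HasDerivAt w v t) :
    HasDerivAt (f ∘ w) (inner ℝ f' v) t := by
  simpa using hf.hasFDerivAt.comp_hasDerivAt t hw

theorem le_sq_of_abs_rpow_half_le {x y : ℝ} (h : |x| ^ (1 / 2 : ℝ) ≤ y) : x ≤ y ^ 2 :=
  calc x ≤ |x| := le_abs_self x
    _ = √|x| ^ 2 := (sq_sqrt (abs_nonneg x)).symm
    _ ≤ y ^ 2 := by
      rw [sqrt_eq_rpow]
      exact pow_le_pow_left₀ (by positivity) h 2

theorem stmt1_general {M : ℕ} (f : EuclideanSpace ℝ (Fin M) → ℝ)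
    (wstar : EuclideanSpace ℝ (Fin M)) (C r : ℝ)
    (hf : ContDiff ℝ 1 f)
    (hLI : ∀ v ∈ Metric.ball wstar r,
      |f v - f wstar| ^ ((1 : ℝ) / 2) ≤ C * ‖gradient f v‖)
    (w : ℝ → EuclideanSpace ℝ (Fin M))
    (hflow : ∀ t, 0 ≤ t → HasDerivAt w (-(gradient f (w t))) t)
    (hball : ∀ t, 0 ≤ t → w t ∈ Metric.ball wstar r) :
    ∀ t, 0 ≤ t →
      f (w t) - f wstar ≤ (f (w 0) - f wstar) * Real.exp (-t / C ^ 2) := by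
  have hderiv : ∀ t, 0 ≤ t →
      HasDerivAt (fun s => f (w s) - f wstar) (-‖gradient f (w t)‖ ^ 2) t := fun t ht => by
    have := ((hf.differentiable one_ne_zero (w t)).hasGradientAt.comp_hasDerivAt
      (hflow t ht)).sub_const (f wstar)
    rwa [inner_neg_right, real_inner_self_eq_norm_sq] at this
  have hbound : ∀ t, 0 ≤ t →
      -‖gradient f (w t)‖ ^ 2 ≤ -(C ^ 2)⁻¹ * (f (w t) - f wstar) := fun t ht => by
    have hsq := le_sq_of_abs_rpow_half_le (hLI (w t) (hball t ht))
    rw [mul_pow] at hsq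
    linarith [inv_mul_le_of_le_mul₀ (sq_nonneg C) (sq_nonneg _) hsq]
  intro t ht
  have hdecay := le_mul_exp_of_hasDerivAt_le_mul hderiv hbound ht
  rwa [sub_zero, neg_mul, inv_mul_eq_div, ← neg_div] at hdecay

/-- Lojasiewicz inequality with exponent 1/2 gives exponential decay of the loss
along the gradient flow. -/
theorem stmt1 {M : ℕ} (f : EuclideanSpace ℝ (Fin M) → ℝ)
    (wstar : EuclideanSpace ℝ (Fin M)) (C r : ℝ) (hC : 0 < C) (hr : 0 < r)
    (hf : ContDiff ℝ 1 f)
    (hLI : ∀ v ∈ Metric.ball wstar r,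
      |f v - f wstar| ^ ((1 : ℝ) / 2) ≤ C * ‖gradient f v‖)
    (w : ℝ → EuclideanSpace ℝ (Fin M))
    (hflow : ∀ t, 0 ≤ t → HasDerivAt w (-(gradient f (w t))) t)
    (hball : ∀ t, 0 ≤ t → w t ∈ Metric.ball wstar r)
    (hlb : ∀ t, 0 ≤ t → f wstar ≤ f (w t)) :
    ∀ t, 0 ≤ t →
      f (w t) - f wstar ≤ (f (w 0) - f wstar) * Real.exp (-t / C ^ 2) :=
  stmt1_general f wstar C r hf hLI w hflow hball
end

section
/- Let f : ℝ^M → ℝ be C¹ and satisfy the Lojasiewicz gradient inequality at w* with exponent α ∈ (1/2, 1): |f(w) - f(w*)|^α ≤ C‖∇f(w)‖ on a ball B around w*. If w(t) solves w'(t) = -∇f(w(t)), stays in B, and f(w(t)) > f(w*) for all t ≥ 0, then f(w(t)) - f(w*) ≤ K · t^(-1/(2α-1)) for some constant K > 0 and all t ≥ 1. -/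
/-!
Along the flow, `g t = f (w t) - f w*` satisfies `g' = -‖∇f (w t)‖² ≤ -g ^ (2α) / C²` by the
Lojasiewicz inequality. Writing `2α = 1 + β` with `β = 2α - 1 > 0`, the function `g ^ (-β)`
then grows at least linearly, `(g ^ (-β))' ≥ β / C²`, so `g t ≤ (β t / C²) ^ (-1/β)`.
-/

open Real

theorem HasDerivAt.comp_neg_gradient {F : Type*} [NormedAddCommGroup F] [InnerProductSpace ℝ F]
    [CompleteSpace F] {f : F → ℝ} {w : ℝ → F} {t : ℝ} (hf : DifferentiableAt ℝ f (w t))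
    (hw : HasDerivAt w (-gradient f (w t)) t) :
    HasDerivAt (fun s => f (w s)) (-‖gradient f (w t)‖ ^ 2) t := by
  have := hf.hasGradientAt.hasFDerivAt.comp_hasDerivAt t hw
  rwa [InnerProductSpace.toDual_apply_apply, inner_neg_right, real_inner_self_eq_norm_sq] at this

theorem neg_sq_le_of_rpow_le_mul {x y C α : ℝ} (hx : 0 ≤ x) (hC : 0 < C)
    (h : x ^ α ≤ C * y) :
    -y ^ 2 ≤ -(C ^ 2)⁻¹ * x ^ (2 * α) := by
  have hy : x ^ α / C ≤ y := (div_le_iff₀' hC).2 h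
  have hsq : (x ^ α / C) ^ 2 ≤ y ^ 2 := pow_le_pow_left₀ (by positivity) hy 2
  rw [mul_comm 2 α, rpow_mul hx, rpow_two]
  linarith [show (x ^ α / C) ^ 2 = (C ^ 2)⁻¹ * (x ^ α) ^ 2 by ring]

section DifferentialInequality

variable {g g' : ℝ → ℝ} {β κ : ℝ}

theorem mul_le_rpow_neg_sub_of_hasDerivAt_le (hβ : 0 ≤ β) (hpos : ∀ t, 0 ≤ t → 0 < g t)
    (hderiv : ∀ t, 0 ≤ t → HasDerivAt g (g' t) t)
    (hle : ∀ t, 0 ≤ t → g' t ≤ -κ * g t ^ (1 + β)) {t : ℝ} (ht : 0 ≤ t) :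
    β * κ * t ≤ g t ^ (-β) - g 0 ^ (-β) := by
  have hpow : ∀ s, 0 ≤ s →
      HasDerivAt (fun s => g s ^ (-β)) (g' s * (-β) * g s ^ (-β - 1)) s := fun s hs =>
    (hderiv s hs).rpow_const (Or.inl (hpos s hs).ne')
  have hslope : ∀ s, 0 ≤ s → β * κ ≤ g' s * (-β) * g s ^ (-β - 1) := by
    intro s hs
    have hcancel : g s ^ (1 + β) * g s ^ (-β - 1) = 1 := by
      rw [← rpow_add (hpos s hs), show 1 + β + (-β - 1) = 0 by ring, rpow_zero]
    have hnonneg : 0 ≤ β * g s ^ (-β - 1) := mul_nonneg hβ (rpow_nonneg (hpos s hs).le _)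
    linear_combination mul_le_mul_of_nonneg_right (hle s hs) hnonneg - κ * β * hcancel
  have hmono := (convex_Ici (0 : ℝ)).mul_sub_le_image_sub_of_le_deriv
    (f := fun s => g s ^ (-β)) (C := β * κ)
    (fun s hs => (hpow s hs).continuousAt.continuousWithinAt)
    (fun s hs => (hpow s (interior_subset hs)).differentiableAt.differentiableWithinAt)
    (fun s hs => (hpow s (interior_subset hs)).deriv ▸ hslope s (interior_subset hs))
    0 Set.self_mem_Ici t ht ht
  simpa using hmono

theorem le_rpow_mul_rpow_of_hasDerivAt_le (hβ : 0 < β) (hκ : 0 < κ)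
    (hpos : ∀ t, 0 ≤ t → 0 < g t) (hderiv : ∀ t, 0 ≤ t → HasDerivAt g (g' t) t)
    (hle : ∀ t, 0 ≤ t → g' t ≤ -κ * g t ^ (1 + β)) {t : ℝ} (ht : 0 < t) :
    g t ≤ (β * κ) ^ (-(1 / β)) * t ^ (-(1 / β)) := by
  have hgrowth : β * κ * t ≤ g t ^ (-β) := by
    linarith [mul_le_rpow_neg_sub_of_hasDerivAt_le hβ.le hpos hderiv hle ht.le,
      rpow_pos_of_pos (hpos 0 le_rfl) (-β)]
  calc g t = (g t ^ (-β)) ^ (-(1 / β)) := by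
        rw [← rpow_mul (hpos t ht.le).le, neg_mul_neg, mul_one_div_cancel hβ.ne', rpow_one]
    _ ≤ (β * κ * t) ^ (-(1 / β)) :=
        rpow_le_rpow_of_nonpos (by positivity) hgrowth (by simp [hβ.le])
    _ = (β * κ) ^ (-(1 / β)) * t ^ (-(1 / β)) := mul_rpow (by positivity) ht.le

end DifferentialInequality

theorem stmt2_general {M : ℕ} (f : EuclideanSpace ℝ (Fin M) → ℝ)
    (wstar : EuclideanSpace ℝ (Fin M)) (α C r : ℝ)
    (hα : α ∈ Set.Ioo (1 / 2 : ℝ) 1) (hC : 0 < C)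
    (hf : ContDiff ℝ 1 f)
    (hLI : ∀ v ∈ Metric.ball wstar r,
      |f v - f wstar| ^ α ≤ C * ‖gradient f v‖)
    (w : ℝ → EuclideanSpace ℝ (Fin M))
    (hflow : ∀ t, 0 ≤ t → HasDerivAt w (-(gradient f (w t))) t)
    (hball : ∀ t, 0 ≤ t → w t ∈ Metric.ball wstar r)
    (hgt : ∀ t, 0 ≤ t → f wstar < f (w t)) :
    ∃ K > 0, ∀ t : ℝ, 1 ≤ t →
      f (w t) - f wstar ≤ K * t ^ (-(1 / (2 * α - 1)) : ℝ) := by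
  obtain ⟨hα_gt, -⟩ := hα
  set g : ℝ → ℝ := fun t => f (w t) - f wstar
  have hg_pos : ∀ t, 0 ≤ t → 0 < g t := fun t ht => sub_pos.2 (hgt t ht)
  have hg_deriv : ∀ t, 0 ≤ t → HasDerivAt g (-‖gradient f (w t)‖ ^ 2) t := fun t ht =>
    ((hflow t ht).comp_neg_gradient (hf.differentiable one_ne_zero).differentiableAt).sub_const _
  have hg_le : ∀ t, 0 ≤ t →
      -‖gradient f (w t)‖ ^ 2 ≤ -(C ^ 2)⁻¹ * g t ^ (1 + (2 * α - 1)) := by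
    intro t ht
    rw [add_sub_cancel]
    refine neg_sq_le_of_rpow_le_mul (hg_pos t ht).le hC ?_
    simpa only [g, abs_of_pos (hg_pos t ht)] using hLI (w t) (hball t ht)
  have hβ : 0 < 2 * α - 1 := by linarith
  have hκ : 0 < (C ^ 2)⁻¹ := by positivity
  exact ⟨_, rpow_pos_of_pos (mul_pos hβ hκ) _, fun t ht =>
    le_rpow_mul_rpow_of_hasDerivAt_le hβ hκ hg_pos hg_deriv hg_le (by linarith)⟩

/-- Lojasiewicz inequality with exponent `α ∈ (1/2, 1)` gives algebraic decay of the loss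
along the gradient flow. -/
theorem stmt2 {M : ℕ} (f : EuclideanSpace ℝ (Fin M) → ℝ)
    (wstar : EuclideanSpace ℝ (Fin M)) (α C r : ℝ)
    (hα : α ∈ Set.Ioo (1 / 2 : ℝ) 1) (hC : 0 < C) (hr : 0 < r)
    (hf : ContDiff ℝ 1 f)
    (hLI : ∀ v ∈ Metric.ball wstar r,
      |f v - f wstar| ^ α ≤ C * ‖gradient f v‖)
    (w : ℝ → EuclideanSpace ℝ (Fin M))
    (hflow : ∀ t, 0 ≤ t → HasDerivAt w (-(gradient f (w t))) t)
    (hball : ∀ t, 0 ≤ t → w t ∈ Metric.ball wstar r)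
    (hgt : ∀ t, 0 ≤ t → f wstar < f (w t)) :
    ∃ K > 0, ∀ t : ℝ, 1 ≤ t →
      f (w t) - f wstar ≤ K * t ^ (-(1 / (2 * α - 1)) : ℝ) :=
  stmt2_general f wstar α C r hα hC hf hLI w hflow hball hgt
end

section
/- Let f : ℝ^M → ℝ be C¹ satisfying the Lojasiewicz gradient inequality |f(w) - f(w*)|^α ≤ C‖∇f(w)‖ with α ∈ [1/2, 1) on a ball B around w*, with f(w*) = 0 and f ≥ 0 on B. If the gradient flow trajectory w(t) stays in B for all t ≥ 0, then the trajectory has finite length: ∫₀^∞ ‖w'(t)‖ dt ≤ (C/(1-α)) · f(w(0))^(1-α), and hence w(t) converges to a limit as t → ∞. -/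
/-!
Along the flow, `g = f ∘ w ≥ 0` decreases with `g' = -‖∇f(w)‖²`, and the Lojasiewicz inequality
`g ^ α ≤ C ‖∇f(w)‖` turns this into `‖w'‖ = ‖∇f(w)‖ ≤ -(C / (1 - α)) (g ^ (1 - α))'`. Integrating
bounds the length of every arc `w([0, b])` by `(C / (1 - α)) g(0) ^ (1 - α)`, so `w'` is integrable
on `(0, ∞)` and `w` converges.
-/

open MeasureTheory

open Set Filter Topology InnerProductSpace

theorem ContDiff.continuous_gradient {𝕜 F : Type*} [RCLike 𝕜] [NormedAddCommGroup F]
    [InnerProductSpace 𝕜 F] [CompleteSpace F] {f : F → 𝕜} (hf : ContDiff 𝕜 1 f) :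
    Continuous (gradient f) :=
  (toDual 𝕜 F).symm.continuous.comp (hf.continuous_fderiv one_ne_zero)

theorem HasGradientAt.hasDerivAt_comp {F : Type*} [NormedAddCommGroup F] [InnerProductSpace ℝ F]
    [CompleteSpace F] {f : F → ℝ} {f' w' : F} {w : ℝ → F} {t : ℝ}
    (hf : HasGradientAt f f' (w t)) (hw : HasDerivAt w w' t) :
    HasDerivAt (f ∘ w) ⟪f', w'⟫_ℝ t :=
  (hasGradientAt_iff_hasFDerivAt.mp hf).comp_hasDerivAt t hw

theorem le_mul_rpow_neg_mul_sq {x y α C : ℝ} (hx : 0 < x) (hy : 0 ≤ y) (h : x ^ α ≤ C * y) :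
    y ≤ C * x ^ (-α) * y ^ 2 := by
  have hinv : x ^ (-α) * x ^ α = 1 := by
    rw [← Real.rpow_add hx, neg_add_cancel, Real.rpow_zero]
  calc y = x ^ (-α) * x ^ α * y := by rw [hinv, one_mul]
    _ ≤ x ^ (-α) * (C * y) * y := by gcongr
    _ = C * x ^ (-α) * y ^ 2 := by ring

-- `t ↦ -(C / (1 - α)) g t ^ (1 - α)` has right derivative `≥ φ`: by the chain rule where `g > 0`;
-- where `g` vanishes it stays zero, so the right derivative is `0 = φ` by Fermat's theorem.
theorem integral_le_of_hasDerivAt_neg_sq_of_rpow_le {g φ : ℝ → ℝ} {a b α C : ℝ} (hab : a ≤ b)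
    (hα : α < 1) (hφ : ContinuousOn φ (Icc a b)) (hφ0 : ∀ t ∈ Icc a b, 0 ≤ φ t)
    (hg0 : ∀ t ∈ Icc a b, 0 ≤ g t) (hg : ∀ t ∈ Icc a b, HasDerivAt g (-(φ t ^ 2)) t)
    (hLI : ∀ t ∈ Icc a b, g t ^ α ≤ C * φ t) :
    ∫ t in a..b, φ t ≤ C / (1 - α) * (g a ^ (1 - α) - g b ^ (1 - α)) := by
  have h1α : 0 < 1 - α := sub_pos.mpr hα
  have hgc : ContinuousOn g (Icc a b) := fun t ht => (hg t ht).continuousAt.continuousWithinAt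
  have hanti : AntitoneOn g (Icc a b) :=
    antitoneOn_of_hasDerivWithinAt_nonpos (convex_Icc a b) hgc
      (fun t ht => (hg t (interior_subset ht)).hasDerivWithinAt)
      fun t _ => neg_nonpos.mpr (sq_nonneg _)
  have hφ_of_zero : ∀ t ∈ Ioo a b, g t = 0 → φ t = 0 := by
    intro t ht hgt
    have hmin : IsLocalMin g t := by
      filter_upwards [Ioo_mem_nhds ht.1 ht.2] with s hs
      rw [hgt]; exact hg0 s (Ioo_subset_Icc_self hs)
    simpa using hmin.hasDerivAt_eq_zero (hg t (Ioo_subset_Icc_self ht))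
  have hftc := intervalIntegral.integral_le_sub_of_hasDeriv_right_of_le hab
    (g := fun t => -(C / (1 - α) * g t ^ (1 - α))) (g' := fun t => C * g t ^ (-α) * φ t ^ 2)
    (continuousOn_const.mul (hgc.rpow_const fun _ _ => Or.inr h1α.le)).neg ?_
    (hφ.integrableOn_compact isCompact_Icc) ?_
  · linarith
  · intro t ht
    rcases (hg0 t (Ioo_subset_Icc_self ht)).lt_or_eq with hpos | hzero
    · have hderiv := (((hg t (Ioo_subset_Icc_self ht)).rpow_const (p := 1 - α)
        (Or.inl hpos.ne')).const_mul (C / (1 - α))).neg.hasDerivWithinAt (s := Ioi t)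
      refine hderiv.congr_deriv ?_
      rw [show 1 - α - 1 = -α by ring]
      field_simp
    · have hzero_right : ∀ s ∈ Ico t b, g s = 0 := fun s hs =>
        le_antisymm (hzero ▸ hanti (Ioo_subset_Icc_self ht) ⟨ht.1.le.trans hs.1, hs.2.le⟩ hs.1)
          (hg0 s ⟨ht.1.le.trans hs.1, hs.2.le⟩)
      have hev : (fun s => -(C / (1 - α) * g s ^ (1 - α))) =ᶠ[𝓝[>] t] fun _ => 0 := by
        filter_upwards [Ioo_mem_nhdsGT ht.2] with s hs
        simp [hzero_right s (Ioo_subset_Ico_self hs), h1α.ne']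
      have hval : C * g t ^ (-α) * φ t ^ 2 = 0 := by simp [hφ_of_zero t ht hzero.symm]
      rw [hval]
      exact (hasDerivWithinAt_const t (Ioi t) (0 : ℝ)).congr_of_eventuallyEq hev
        (by simp [← hzero, h1α.ne'])
  · intro t ht
    rcases (hg0 t (Ioo_subset_Icc_self ht)).lt_or_eq with hpos | hzero
    · exact le_mul_rpow_neg_mul_sq hpos (hφ0 t (Ioo_subset_Icc_self ht))
        (hLI t (Ioo_subset_Icc_self ht))
    · simp [hφ_of_zero t ht hzero.symm]

theorem integrableOn_Ioi_and_integral_le_of_intervalIntegral_le {φ : ℝ → ℝ} {a K : ℝ}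
    (hφ : ∀ b, IntegrableOn φ (Ioc a b)) (hφ0 : ∀ t, 0 ≤ φ t)
    (h : ∀ b, a ≤ b → ∫ t in a..b, φ t ≤ K) :
    IntegrableOn φ (Ioi a) ∧ ∫ t in Ioi a, φ t ≤ K := by
  have hint : IntegrableOn φ (Ioi a) := by
    refine integrableOn_Ioi_of_intervalIntegral_norm_bounded K a hφ tendsto_id ?_
    filter_upwards [eventually_ge_atTop a] with b hb
    simpa only [Real.norm_of_nonneg (hφ0 _)] using h b hb
  refine ⟨hint, le_of_tendsto (intervalIntegral_tendsto_integral_Ioi a hint tendsto_id) ?_⟩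
  filter_upwards [eventually_ge_atTop a] with b hb using h b hb

theorem stmt3_general {M : ℕ} (f : EuclideanSpace ℝ (Fin M) → ℝ)
    (wstar : EuclideanSpace ℝ (Fin M)) (α C r : ℝ)
    (hα : α ∈ Set.Ico (1 / 2 : ℝ) 1) (hC : 0 < C)
    (hf : ContDiff ℝ 1 f)
    (hfs : f wstar = 0)
    (hnn : ∀ v ∈ Metric.ball wstar r, 0 ≤ f v)
    (hLI : ∀ v ∈ Metric.ball wstar r,
      |f v - f wstar| ^ α ≤ C * ‖gradient f v‖)
    (w : ℝ → EuclideanSpace ℝ (Fin M))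
    (hflow : ∀ t, 0 ≤ t → HasDerivAt w (-(gradient f (w t))) t)
    (hball : ∀ t, 0 ≤ t → w t ∈ Metric.ball wstar r) :
    (∫ t in Set.Ioi (0 : ℝ), ‖deriv w t‖) ≤ (C / (1 - α)) * f (w 0) ^ (1 - α) ∧
      ∃ l, Filter.Tendsto w Filter.atTop (nhds l) := by
  set φ : ℝ → ℝ := fun t => ‖gradient f (w t)‖
  have hgrad : ContinuousOn (fun t => gradient f (w t)) (Ici 0) :=
    hf.continuous_gradient.comp_continuousOn fun t ht =>
      (hflow t ht).continuousAt.continuousWithinAt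
  have hφ : ContinuousOn φ (Ici 0) := hgrad.norm
  have hdecay : ∀ t, 0 ≤ t → HasDerivAt (f ∘ w) (-(φ t ^ 2)) t := fun t ht => by
    simpa [φ, inner_neg_right, real_inner_self_eq_norm_sq] using
      ((hf.differentiable one_ne_zero) (w t)).hasGradientAt.hasDerivAt_comp (hflow t ht)
  have hloj : ∀ t, 0 ≤ t → (f ∘ w) t ^ α ≤ C * φ t := fun t ht => by
    simpa [hfs, abs_of_nonneg (hnn _ (hball t ht))] using hLI _ (hball t ht)
  have hbound : ∀ b, 0 ≤ b → ∫ t in 0..b, φ t ≤ C / (1 - α) * f (w 0) ^ (1 - α) := by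
    intro b hb
    have hgb : 0 ≤ f (w b) ^ (1 - α) := Real.rpow_nonneg (hnn _ (hball b hb)) _
    have hc : 0 ≤ C / (1 - α) := div_nonneg hC.le (sub_pos.mpr hα.2).le
    refine (integral_le_of_hasDerivAt_neg_sq_of_rpow_le hb hα.2 (hφ.mono Icc_subset_Ici_self)
      (fun t _ => norm_nonneg _) (fun t ht => hnn _ (hball t ht.1)) (fun t ht => hdecay t ht.1)
      (fun t ht => hloj t ht.1)).trans ?_
    nlinarith
  obtain ⟨hint, hle⟩ := integrableOn_Ioi_and_integral_le_of_intervalIntegral_le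
    (fun b => ((hφ.mono Icc_subset_Ici_self).integrableOn_compact isCompact_Icc).mono_set
      Ioc_subset_Icc_self) (fun t => norm_nonneg _) hbound
  have hderiv : ∀ t ∈ Ioi (0 : ℝ), HasDerivAt w (-(gradient f (w t))) t :=
    fun t ht => hflow t (le_of_lt ht)
  refine ⟨?_, _, tendsto_limUnder_of_hasDerivAt_of_integrableOn_Ioi hderiv ?_⟩
  · rwa [setIntegral_congr_fun measurableSet_Ioi fun t ht => by
      rw [(hderiv t ht).deriv, norm_neg]]
  · exact ((integrable_norm_iff ((hgrad.mono Ioi_subset_Ici_self).aestronglyMeasurable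
      measurableSet_Ioi)).mp hint).neg

/-- Under a Lojasiewicz inequality, the gradient flow trajectory has finite length
bounded by `(C/(1-α)) f(w 0)^(1-α)`, and hence converges. -/
theorem stmt3 {M : ℕ} (f : EuclideanSpace ℝ (Fin M) → ℝ)
    (wstar : EuclideanSpace ℝ (Fin M)) (α C r : ℝ)
    (hα : α ∈ Set.Ico (1 / 2 : ℝ) 1) (hC : 0 < C) (hr : 0 < r)
    (hf : ContDiff ℝ 1 f)
    (hfs : f wstar = 0)
    (hnn : ∀ v ∈ Metric.ball wstar r, 0 ≤ f v)
    (hLI : ∀ v ∈ Metric.ball wstar r,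
      |f v - f wstar| ^ α ≤ C * ‖gradient f v‖)
    (w : ℝ → EuclideanSpace ℝ (Fin M))
    (hflow : ∀ t, 0 ≤ t → HasDerivAt w (-(gradient f (w t))) t)
    (hball : ∀ t, 0 ≤ t → w t ∈ Metric.ball wstar r) :
    (∫ t in Set.Ioi (0 : ℝ), ‖deriv w t‖) ≤ (C / (1 - α)) * f (w 0) ^ (1 - α) ∧
      ∃ l, Filter.Tendsto w Filter.atTop (nhds l) :=
  stmt3_general f wstar α C r hα hC hf hfs hnn hLI w hflow hball
end

section
/- Consider the spiral architecture A : ℝ → ℝ², A(w) = (w sin w, w cos w). Then for every p ∈ ℝ², dist(p, range A) ≤ π. -/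
/-- The spiral architecture `A(w) = (w sin w, w cos w)` covers the plane densely up to
distance `π`: every point of `ℝ²` is within distance `π` of the image of `A`. -/
theorem stmt14 :
    ∀ p : EuclideanSpace ℝ (Fin 2),
      Metric.infDist p
        (Set.range fun w : ℝ =>
          (WithLp.equiv 2 (Fin 2 → ℝ)).symm ![w * Real.sin w, w * Real.cos w])
        ≤ Real.pi := by
  intro p
  set z : ℂ := ⟨p 1, p 0⟩ with hz
  set r := ‖z‖ with hr
  set θ := Complex.arg z with hθ
  have hre : r * Real.cos θ = p 1 := (Complex.norm_mul_cos_arg z).trans rfl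
  have him : r * Real.sin θ = p 0 := (Complex.norm_mul_sin_arg z).trans rfl
  set n := round ((r - θ) / (2 * Real.pi)) with hn
  set w := θ + (n : ℝ) * (2 * Real.pi) with hw
  have hq : ((fun w : ℝ =>
      (WithLp.equiv 2 (Fin 2 → ℝ)).symm ![w * Real.sin w, w * Real.cos w]) w) ∈
      Set.range fun w : ℝ =>
        (WithLp.equiv 2 (Fin 2 → ℝ)).symm ![w * Real.sin w, w * Real.cos w] :=
    Set.mem_range_self w
  refine le_trans (Metric.infDist_le_dist_of_mem hq) ?_
  have hsin : Real.sin w = Real.sin θ := Real.sin_add_int_mul_two_pi θ n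
  have hcos : Real.cos w = Real.cos θ := Real.cos_add_int_mul_two_pi θ n
  have hdist : dist p ((fun w : ℝ =>
      (WithLp.equiv 2 (Fin 2 → ℝ)).symm ![w * Real.sin w, w * Real.cos w]) w) = |r - w| := by
    rw [EuclideanSpace.dist_eq, Fin.sum_univ_two]
    simp only [Real.dist_eq, sq_abs]
    have h0 : p 0 - (WithLp.equiv 2 (Fin 2 → ℝ)).symm ![w * Real.sin w, w * Real.cos w] 0
        = (r - w) * Real.sin θ := by
      simp [WithLp.equiv_symm_apply, hsin, ← him]; ring
    have h1 : p 1 - (WithLp.equiv 2 (Fin 2 → ℝ)).symm ![w * Real.sin w, w * Real.cos w] 1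
        = (r - w) * Real.cos θ := by
      simp [WithLp.equiv_symm_apply, hcos, ← hre]; ring
    rw [h0, h1]
    have : ((r - w) * Real.sin θ) ^ 2 + ((r - w) * Real.cos θ) ^ 2 = (r - w) ^ 2 := by
      have := Real.sin_sq_add_cos_sq θ
      nlinarith [this]
    rw [this, Real.sqrt_sq_eq_abs]
  rw [hdist]
  have hπ : (0:ℝ) < 2 * Real.pi := by positivity
  have hround : |(r - θ) / (2 * Real.pi) - (n : ℝ)| ≤ 1 / 2 := by
    rw [hn]; exact abs_sub_round _
  have key : r - w = ((r - θ) / (2 * Real.pi) - (n : ℝ)) * (2 * Real.pi) := by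
    field_simp [hw]
    ring
  have : |r - w| = |(r - θ) / (2 * Real.pi) - (n : ℝ)| * (2 * Real.pi) := by
    rw [key, abs_mul, abs_of_pos hπ]
  rw [this]
  calc |(r - θ) / (2 * Real.pi) - (n : ℝ)| * (2 * Real.pi)
      ≤ (1 / 2) * (2 * Real.pi) := by
        exact mul_le_mul_of_nonneg_right hround (le_of_lt hπ)
    _ = Real.pi := by ring
end
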